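/- Let K_A ⊆ ℝ^m and K_B' ⊆ ℝ^n be convex compact sets, with K_B ⊆ K_B' convex compact, and let g : K_A × K_B' → ℝ be affine (or bilinear) in each argument. Suppose strategies p_1,…,p_T ∈ K_A and q_1,…,q_T ∈ K_B' satisfy: (i) for each t, g(p_t, q_t) ≥ max_{q ∈ K_B} g(p_t, q) - ε₀ (approximate best response), and (ii) for every p* ∈ K_A, ∑_t g(p_t, q_t) ≤ ∑_t g(p*, q_t) + R (regret bound). Then the average q̄ = (1/T)∑_t q_t ∈ K_B' satisfies, for every p* ∈ K_A, λ* ≤ g(p*, q̄) + R/T + ε₀, where λ* = min_{p ∈ K_A} max_{q ∈ K_B} g(p, q). -/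

import Mathlib

/-!
With `p̄` the average of the `P t`, affinity of `g` in its first argument turns the approximate
best responses into `g p̄ q ≤ (1/T) ∑ g (P t) (Q t) + ε₀` for all `q ∈ K_B`, and affinity in the
second argument turns the regret bound into `(1/T) ∑ g (P t) (Q t) ≤ g p* q̄ + R/T`. Since
`p̄ ∈ K_A`, `λ*` is at most `sup_{q ∈ K_B} g p̄ q`.
-/

open Finset

/-- Such an `f` is both convex and concave, so Jensen's inequality holds in both directions. -/
lemma map_sum_smul_of_map_add_smul {E ι : Type*} [AddCommGroup E] [Module ℝ E] {f : E → ℝ}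
    (hf : ∀ a b : E, ∀ s t : ℝ, 0 ≤ s → 0 ≤ t → s + t = 1 → f (s • a + t • b) = s * f a + t * f b)
    {s : Finset ι} {w : ι → ℝ} (x : ι → E) (hw₀ : ∀ i ∈ s, 0 ≤ w i) (hw₁ : ∑ i ∈ s, w i = 1) :
    f (∑ i ∈ s, w i • x i) = ∑ i ∈ s, w i * f (x i) := by
  have hconvex : ConvexOn ℝ Set.univ f :=
    ⟨convex_univ, fun a _ b _ s t hs ht hst => (hf a b s t hs ht hst).le⟩
  have hconcave : ConcaveOn ℝ Set.univ f :=
    ⟨convex_univ, fun a _ b _ s t hs ht hst => (hf a b s t hs ht hst).ge⟩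
  exact le_antisymm (hconvex.map_sum_le hw₀ hw₁ fun i _ => Set.mem_univ _)
    (hconcave.le_map_sum hw₀ hw₁ fun i _ => Set.mem_univ _)

lemma sInf_image_sSup_image_le {α β : Type*} [TopologicalSpace α] [TopologicalSpace β]
    {KA : Set α} {KB : Set β} (hKA : IsCompact KA) (hKB : IsCompact KB) (hKBne : KB.Nonempty)
    {g : α → β → ℝ} (hg₁ : ∀ q, ContinuousOn (g · q) KA) (hg₂ : ∀ p, ContinuousOn (g p) KB)
    {p : α} (hp : p ∈ KA) :
    sInf ((fun p => sSup (g p '' KB)) '' KA) ≤ sSup (g p '' KB) := by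
  obtain ⟨q₀, hq₀⟩ := hKBne
  obtain ⟨b, hb⟩ := (hKA.image_of_continuousOn (hg₁ q₀)).bddBelow
  refine csInf_le ⟨b, ?_⟩ ⟨p, hp, rfl⟩
  rintro _ ⟨p', hp', rfl⟩
  exact (hb ⟨p', hp', rfl⟩).trans
    (le_csSup (hKB.image_of_continuousOn (hg₂ p')).bddAbove ⟨q₀, hq₀, rfl⟩)

theorem stmt5_general {m n : ℕ} (KA : Set (Fin m → ℝ)) (KB KB' : Set (Fin n → ℝ))
    (hKAc : IsCompact KA) (hKAconv : Convex ℝ KA)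
    (hKBc : IsCompact KB) (hKBne : KB.Nonempty)
    (hKB'conv : Convex ℝ KB')
    (g : (Fin m → ℝ) → (Fin n → ℝ) → ℝ)
    (hgAff1 : ∀ q, ∀ a b : Fin m → ℝ, ∀ s t : ℝ, 0 ≤ s → 0 ≤ t → s + t = 1 →
      g (s • a + t • b) q = s * g a q + t * g b q)
    (hgAff2 : ∀ p, ∀ a b : Fin n → ℝ, ∀ s t : ℝ, 0 ≤ s → 0 ≤ t → s + t = 1 →
      g p (s • a + t • b) = s * g p a + t * g p b)
    (hgCont : Continuous fun pq : (Fin m → ℝ) × (Fin n → ℝ) => g pq.1 pq.2)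
    (T : ℕ) (hT : 0 < T) (P : Fin T → (Fin m → ℝ)) (Q : Fin T → (Fin n → ℝ))
    (hP : ∀ t, P t ∈ KA) (hQ : ∀ t, Q t ∈ KB')
    (ε₀ R : ℝ)
    (hbr : ∀ t, ∀ q ∈ KB, g (P t) (Q t) ≥ g (P t) q - ε₀)
    (hreg : ∀ pstar ∈ KA, ∑ t, g (P t) (Q t) ≤ ∑ t, g pstar (Q t) + R) :
    ((T : ℝ)⁻¹ • ∑ t, Q t) ∈ KB' ∧
    ∀ pstar ∈ KA,
      sInf ((fun p => sSup ((g p) '' KB)) '' KA)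
        ≤ g pstar ((T : ℝ)⁻¹ • ∑ t, Q t) + R / T + ε₀ := by
  have hT' : (T : ℝ) ≠ 0 := by positivity
  have hw₀ : ∀ t ∈ (univ : Finset (Fin T)), (0 : ℝ) ≤ (T : ℝ)⁻¹ := fun _ _ => by positivity
  have hw₁ : ∑ _t : Fin T, (T : ℝ)⁻¹ = 1 := by simp [hT']
  rw [smul_sum]
  refine ⟨hKB'conv.sum_mem hw₀ hw₁ fun t _ => hQ t, fun pstar hpstar => ?_⟩
  have hpbar : ∑ t, (T : ℝ)⁻¹ • P t ∈ KA := hKAconv.sum_mem hw₀ hw₁ fun t _ => hP t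
  have hbest : ∀ q ∈ KB, g (∑ t, (T : ℝ)⁻¹ • P t) q ≤ (T : ℝ)⁻¹ * ∑ t, g (P t) (Q t) + ε₀ := by
    intro q hq
    rw [map_sum_smul_of_map_add_smul (f := (g · q)) (hgAff1 q) P hw₀ hw₁, ← mul_sum]
    have : ∑ t, g (P t) q ≤ ∑ t, g (P t) (Q t) + T * ε₀ := by
      simpa [sum_add_distrib] using sum_le_sum fun t (_ : t ∈ univ) =>
        (by linarith [hbr t q hq] : g (P t) q ≤ g (P t) (Q t) + ε₀)
    calc (T : ℝ)⁻¹ * ∑ t, g (P t) q ≤ (T : ℝ)⁻¹ * (∑ t, g (P t) (Q t) + T * ε₀) := by gcongr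
      _ = _ := by field_simp
  have hregret : (T : ℝ)⁻¹ * ∑ t, g (P t) (Q t) ≤ g pstar (∑ t, (T : ℝ)⁻¹ • Q t) + R / T := by
    rw [map_sum_smul_of_map_add_smul (hgAff2 pstar) Q hw₀ hw₁, ← mul_sum, div_eq_inv_mul,
      ← mul_add]
    gcongr
    exact hreg pstar hpstar
  calc sInf ((fun p => sSup (g p '' KB)) '' KA) ≤ sSup (g (∑ t, (T : ℝ)⁻¹ • P t) '' KB) :=
        sInf_image_sSup_image_le hKAc hKBc hKBne
          (fun q => (hgCont.comp (.prodMk_left q)).continuousOn)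
          (fun p => (hgCont.comp (.prodMk_right p)).continuousOn) hpbar
    _ ≤ (T : ℝ)⁻¹ * ∑ t, g (P t) (Q t) + ε₀ :=
        csSup_le (hKBne.image _) (Set.forall_mem_image.2 hbest)
    _ ≤ _ := by linarith

/-- Deterministic core of Proposition 4 (Improper Zero Sum Games with Oracles):
    given approximate-best-response play by B over the improper set K_B' and a
    regret bound for A, the average improper strategy q̄ lies in K_B' and satisfies
    λ* ≤ g(p*, q̄) + R/T + ε₀ for every p* ∈ K_A, where
    λ* = min_{p ∈ K_A} max_{q ∈ K_B} g(p,q). -/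
theorem stmt5 {m n : ℕ} (KA : Set (Fin m → ℝ)) (KB KB' : Set (Fin n → ℝ))
    (hKAc : IsCompact KA) (hKAconv : Convex ℝ KA) (hKAne : KA.Nonempty)
    (hKBc : IsCompact KB) (hKBconv : Convex ℝ KB) (hKBne : KB.Nonempty)
    (hKB'c : IsCompact KB') (hKB'conv : Convex ℝ KB') (hsub : KB ⊆ KB')
    (g : (Fin m → ℝ) → (Fin n → ℝ) → ℝ)
    (hgAff1 : ∀ q, ∀ a b : Fin m → ℝ, ∀ s t : ℝ, 0 ≤ s → 0 ≤ t → s + t = 1 →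
      g (s • a + t • b) q = s * g a q + t * g b q)
    (hgAff2 : ∀ p, ∀ a b : Fin n → ℝ, ∀ s t : ℝ, 0 ≤ s → 0 ≤ t → s + t = 1 →
      g p (s • a + t • b) = s * g p a + t * g p b)
    (hgCont : Continuous fun pq : (Fin m → ℝ) × (Fin n → ℝ) => g pq.1 pq.2)
    (T : ℕ) (hT : 0 < T) (P : Fin T → (Fin m → ℝ)) (Q : Fin T → (Fin n → ℝ))
    (hP : ∀ t, P t ∈ KA) (hQ : ∀ t, Q t ∈ KB')
    (ε₀ R : ℝ) (hε₀ : 0 ≤ ε₀)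
    (hbr : ∀ t, ∀ q ∈ KB, g (P t) (Q t) ≥ g (P t) q - ε₀)
    (hreg : ∀ pstar ∈ KA, ∑ t, g (P t) (Q t) ≤ ∑ t, g pstar (Q t) + R) :
    ((T : ℝ)⁻¹ • ∑ t, Q t) ∈ KB' ∧
    ∀ pstar ∈ KA,
      sInf ((fun p => sSup ((g p) '' KB)) '' KA)
        ≤ g pstar ((T : ℝ)⁻¹ • ∑ t, Q t) + R / T + ε₀ :=
  stmt5_general KA KB KB' hKAc hKAconv hKBc hKBne hKB'conv g hgAff1 hgAff2 hgCont T hT P Q hP hQ ε₀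
    R hbr hreg
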